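/- arXiv:2302.03514 — 3 statements merged into one kernel-verified Lean document; each statement's English description precedes it below -/
import Mathlib

section
/- (Theorem A, invariance of the action.) Suppose (v,τ) is an r-critical point for some r ∈ [0,1]. Then for every r' ∈ [0,1] one has A_{r'}(v,τ) = −∫ v*λ; in particular the restriction of A_{r'} to the (common) critical set is independent of r'. -/
noncomputable section

/-- The standard complex structure on `ℝ^{2n} ≅ ℝ^n × ℝ^n`, `J(x,y) = (−y,x)`. -/
def Jmap (n : ℕ) (z : EuclideanSpace ℝ (Fin n ⊕ Fin n)) :
    EuclideanSpace ℝ (Fin n ⊕ Fin n) :=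
  WithLp.toLp 2 (Sum.elim (fun j => -z (Sum.inr j)) (fun j => z (Sum.inl j)))

/-- The standard Liouville one-form on `ℝ^{2n}`: `λ_z(w) = ½⟨Jz, w⟩`. -/
def lform (n : ℕ) (z w : EuclideanSpace ℝ (Fin n ⊕ Fin n)) : ℝ :=
  (1 / 2) * (inner ℝ (Jmap n z) w : ℝ)

variable (m : ℕ) (n : Fin m → ℕ)

/-- `H(z) = (H_1(z_1), …, H_m(z_m)) ∈ ℝ^m` evaluated along the loop `v` at time `t`. -/
def Hloop (H : ∀ i, EuclideanSpace ℝ (Fin (n i) ⊕ Fin (n i)) → ℝ)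
    (v : ∀ i, ℝ → EuclideanSpace ℝ (Fin (n i) ⊕ Fin (n i))) (t : ℝ) :
    EuclideanSpace ℝ (Fin m) :=
  WithLp.toLp 2 (fun i => H i (v i t))

/-- The averaged vector `H̄(v) = ∫₀¹ H(v(t)) dt ∈ ℝ^m`. -/
def Hbar (H : ∀ i, EuclideanSpace ℝ (Fin (n i) ⊕ Fin (n i)) → ℝ)
    (v : ∀ i, ℝ → EuclideanSpace ℝ (Fin (n i) ⊕ Fin (n i))) :
    EuclideanSpace ℝ (Fin m) :=
  WithLp.toLp 2 (fun i => ∫ t in (0:ℝ)..1, H i (v i t))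

/-- The `i`-th partial derivative `f_i = ∂f/∂x_i`. -/
def partialD (f : EuclideanSpace ℝ (Fin m) → ℝ) (i : Fin m)
    (x : EuclideanSpace ℝ (Fin m)) : ℝ :=
  fderiv ℝ f x (EuclideanSpace.single i 1)

/-- The area functional `∫ v*λ = Σ_i ∫₀¹ λ_{v_i(t)}(v_i'(t)) dt`. -/
def area (v : ∀ i, ℝ → EuclideanSpace ℝ (Fin (n i) ⊕ Fin (n i))) : ℝ :=
  ∑ i, ∫ t in (0:ℝ)..1, lform (n i) (v i t) (deriv (v i) t)

/-- The interpolated Rabinowitz action functional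
`A_r(v,τ) = −∫ v*λ + τ( r·f(H̄(v)) + (1−r)·∫₀¹ f(H(v(t))) dt )`. -/
def actionR (H : ∀ i, EuclideanSpace ℝ (Fin (n i) ⊕ Fin (n i)) → ℝ)
    (f : EuclideanSpace ℝ (Fin m) → ℝ) (r : ℝ)
    (v : ∀ i, ℝ → EuclideanSpace ℝ (Fin (n i) ⊕ Fin (n i))) (τ : ℝ) : ℝ :=
  -(area m n v)
    + τ * (r * f (Hbar m n H v) + (1 - r) * (∫ t in (0:ℝ)..1, f (Hloop m n H v t)))

/-- `(v, τ)` is an `r`-critical point of `A_r`. -/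
def IsCritPt (H : ∀ i, EuclideanSpace ℝ (Fin (n i) ⊕ Fin (n i)) → ℝ)
    (f : EuclideanSpace ℝ (Fin m) → ℝ) (r : ℝ)
    (v : ∀ i, ℝ → EuclideanSpace ℝ (Fin (n i) ⊕ Fin (n i))) (τ : ℝ) : Prop :=
  (∀ (i : Fin m) (t : ℝ),
      deriv (v i) t =
        (τ * (r * partialD m f i (Hbar m n H v)
            + (1 - r) * partialD m f i (Hloop m n H v t))) •
          Jmap (n i) (gradient (H i) (v i t))) ∧
    r * f (Hbar m n H v) + (1 - r) * (∫ t in (0:ℝ)..1, f (Hloop m n H v t)) = 0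

/-!
At an `r`-critical point the velocity of `v i` is a multiple of `J ∇H_i(v_i)`, which is
orthogonal to `∇H_i(v_i)`, so every `H_i` is conserved along `v_i`. Hence `H(v(t)) = H̄(v)` for
all `t`, both terms of the constraint equal `f(H̄(v))`, the constraint forces `f(H̄(v)) = 0`,
and the constraint term of `A_{r'}` vanishes for every `r'`.
-/

open scoped RealInnerProductSpace

lemma inner_Jmap_self (k : ℕ) (z : EuclideanSpace ℝ (Fin k ⊕ Fin k)) :
    ⟪z, Jmap k z⟫ = 0 := by
  simp only [PiLp.inner_apply, RCLike.inner_apply, starRingEnd_apply, star_trivial,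
    Fintype.sum_sum_type, Jmap, Sum.elim_inl, Sum.elim_inr]
  rw [← Finset.sum_add_distrib]
  simp [mul_comm]

lemma apply_comp_eq_of_inner_gradient_deriv_eq_zero {E : Type*} [NormedAddCommGroup E]
    [InnerProductSpace ℝ E] [CompleteSpace E] {g : E → ℝ} {γ : ℝ → E}
    (hg : Differentiable ℝ g) (hγ : Differentiable ℝ γ)
    (horth : ∀ t, ⟪gradient g (γ t), deriv γ t⟫ = 0) (t s : ℝ) :
    g (γ t) = g (γ s) := by
  refine is_const_of_deriv_eq_zero (hg.comp hγ) (fun u => ?_) t s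
  rw [((hg (γ u)).hasFDerivAt.comp_hasDerivAt u (hγ u).hasDerivAt).deriv, ← horth u,
    gradient, InnerProductSpace.toDual_symm_apply]

lemma apply_comp_eq_of_deriv_eq_smul_Jmap_gradient {k : ℕ}
    {g : EuclideanSpace ℝ (Fin k ⊕ Fin k) → ℝ} {γ : ℝ → EuclideanSpace ℝ (Fin k ⊕ Fin k)}
    (hg : Differentiable ℝ g) (hγ : Differentiable ℝ γ) (c : ℝ → ℝ)
    (hflow : ∀ t, deriv γ t = c t • Jmap k (gradient g (γ t))) (t s : ℝ) :
    g (γ t) = g (γ s) :=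
  apply_comp_eq_of_inner_gradient_deriv_eq_zero hg hγ
    (fun u => by rw [hflow u, inner_smul_right, inner_Jmap_self, mul_zero]) t s

lemma Hloop_eq_Hbar {H : ∀ i, EuclideanSpace ℝ (Fin (n i) ⊕ Fin (n i)) → ℝ}
    {v : ∀ i, ℝ → EuclideanSpace ℝ (Fin (n i) ⊕ Fin (n i))}
    (hconst : ∀ i t s, H i (v i t) = H i (v i s)) (t : ℝ) :
    Hloop m n H v t = Hbar m n H v := by
  ext i
  simp [Hloop, Hbar, hconst i _ t]

theorem action_independent_of_r_on_crit
    (H : ∀ i, EuclideanSpace ℝ (Fin (n i) ⊕ Fin (n i)) → ℝ)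
    (hH : ∀ i, ContDiff ℝ 1 (H i))
    (f : EuclideanSpace ℝ (Fin m) → ℝ)
    (v : ∀ i, ℝ → EuclideanSpace ℝ (Fin (n i) ⊕ Fin (n i)))
    (hv : ∀ i, ContDiff ℝ 1 (v i)) (τ : ℝ)
    (r : ℝ) (hcrit : IsCritPt m n H f r v τ) :
    ∀ r' ∈ Set.Icc (0:ℝ) 1, actionR m n H f r' v τ = -(area m n v) := by
  intro r' _
  have hconst : ∀ i t s, H i (v i t) = H i (v i s) := fun i =>
    apply_comp_eq_of_deriv_eq_smul_Jmap_gradient ((hH i).differentiable one_ne_zero)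
      ((hv i).differentiable one_ne_zero) _ (hcrit.1 i)
  have hint : ∫ t in (0:ℝ)..1, f (Hloop m n H v t) = f (Hbar m n H v) := by
    simp [Hloop_eq_Hbar m n hconst]
  have hzero : f (Hbar m n H v) = 0 := by
    have := hcrit.2
    rw [hint] at this
    linarith
  rw [actionR, hint, hzero]
  ring
end
end

section
/- (Step 1a estimate of the fundamental lemma, abstracted.) Let N ≥ 1, κ > 0, L > 0, τ, μ ∈ ℝ. Let v : ℝ → ℝ^N be a C¹ loop, let Λ : ℝ → (ℝ^N →L ℝ) (continuous linear functionals) be continuous, and let X : ℝ → ℝ^N be continuous, such that for all t ∈ [0,1]: Λ(t)(X(t)) ≥ κ/2, ‖Λ(t)‖ ≤ L (operator norm), and |μ| ≤ κ/3. Then | −∫₀¹ Λ(t)(v'(t)) dt + τ·μ | ≥ (κ/6)·|τ| − L·( ∫₀¹ ‖v'(t) − τ·X(t)‖² dt )^{1/2}. -/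
/-!
Split `v' = (v' - τ • X) + τ • X`. The second part contributes `τ * ∫ Λ X` with `∫ Λ X ≥ κ / 2`,
which exceeds `|τ * μ| ≤ |τ| * κ / 3` by the margin `|τ| * κ / 6`. The first part is bounded by
`L * ‖v' - τ • X‖_{L¹}`, and on the unit interval the `L¹` norm is at most the `L²` norm
(Cauchy–Schwarz, here as nonnegativity of a variance).
-/

open MeasureTheory ProbabilityTheory

lemma sq_integral_le_integral_sq {Ω : Type*} [MeasurableSpace Ω] {μ : Measure Ω}
    [IsProbabilityMeasure μ] {f : Ω → ℝ} (hf : MemLp f 2 μ) :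
    (∫ ω, f ω ∂μ) ^ 2 ≤ ∫ ω, f ω ^ 2 ∂μ :=
  sub_nonneg.mp (variance_eq_sub hf ▸ variance_nonneg f μ)

lemma Continuous.sq_intervalIntegral_unit_le {f : ℝ → ℝ} (hf : Continuous f) :
    (∫ t in (0:ℝ)..1, f t) ^ 2 ≤ ∫ t in (0:ℝ)..1, f t ^ 2 := by
  have : IsProbabilityMeasure (volume.restrict (Set.Ioc (0:ℝ) 1)) := ⟨by simp⟩
  simp only [intervalIntegral.integral_of_le zero_le_one]
  exact sq_integral_le_integral_sq <|
    (memLp_two_iff_integrable_sq hf.aestronglyMeasurable).2 (hf.pow 2).integrableOn_Ioc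

lemma abs_intervalIntegral_clm_apply_le {E : Type*} [NormedAddCommGroup E] [NormedSpace ℝ E]
    {Λ : ℝ → E →L[ℝ] ℝ} {g : ℝ → E} {L : ℝ} (hg : Continuous g)
    (hΛL : ∀ t ∈ Set.Icc (0:ℝ) 1, ‖Λ t‖ ≤ L) :
    |∫ t in (0:ℝ)..1, Λ t (g t)| ≤ L * Real.sqrt (∫ t in (0:ℝ)..1, ‖g t‖ ^ 2) := by
  have hL : 0 ≤ L := (norm_nonneg _).trans (hΛL 0 ⟨le_rfl, zero_le_one⟩)
  calc |∫ t in (0:ℝ)..1, Λ t (g t)|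
      ≤ ∫ t in (0:ℝ)..1, L * ‖g t‖ :=
        intervalIntegral.norm_integral_le_of_norm_le zero_le_one
          (ae_of_all _ fun t ht => (Λ t).le_of_opNorm_le (hΛL t (Set.Ioc_subset_Icc_self ht)) _)
          ((continuous_const.mul hg.norm).intervalIntegrable 0 1)
    _ = L * ∫ t in (0:ℝ)..1, ‖g t‖ := intervalIntegral.integral_const_mul _ _
    _ ≤ L * Real.sqrt (∫ t in (0:ℝ)..1, ‖g t‖ ^ 2) := by
        gcongr
        exact (le_abs_self _).trans (Real.abs_le_sqrt hg.norm.sq_intervalIntegral_unit_le)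

lemma sub_abs_le_abs_neg_add_mul {κ μ τ I J : ℝ} (hμ : μ ≤ κ / 3) (hJ : κ / 2 ≤ J) :
    κ / 6 * |τ| - |I| ≤ |-(I + τ * J) + τ * μ| := by
  have hgap : κ / 6 ≤ |μ - J| := le_abs.2 (Or.inr (by linarith))
  calc κ / 6 * |τ| - |I| ≤ |τ * (μ - J)| - |I| := by
        rw [abs_mul, mul_comm]
        gcongr
    _ ≤ |τ * (μ - J) - I| := abs_sub_abs_le_abs_sub _ _
    _ = |-(I + τ * J) + τ * μ| := by ring_nf

theorem step1a_abstract_general (N : ℕ) (κ L τ μ : ℝ)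
    (v : ℝ → EuclideanSpace ℝ (Fin N)) (hv : ContDiff ℝ 1 v)
    (Λ : ℝ → (EuclideanSpace ℝ (Fin N) →L[ℝ] ℝ)) (hΛ : Continuous Λ)
    (X : ℝ → EuclideanSpace ℝ (Fin N)) (hX : Continuous X)
    (hΛX : ∀ t ∈ Set.Icc (0:ℝ) 1, κ / 2 ≤ Λ t (X t))
    (hΛL : ∀ t ∈ Set.Icc (0:ℝ) 1, ‖Λ t‖ ≤ L)
    (hμ : |μ| ≤ κ / 3) :
    |-(∫ t in (0:ℝ)..1, Λ t (deriv v t)) + τ * μ| ≥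
      (κ / 6) * |τ|
        - L * Real.sqrt (∫ t in (0:ℝ)..1, ‖deriv v t - τ • X t‖ ^ 2) := by
  have hg : Continuous fun t => deriv v t - τ • X t :=
    (hv.continuous_deriv le_rfl).sub (hX.const_smul τ)
  have hsplit : ∫ t in (0:ℝ)..1, Λ t (deriv v t) =
      (∫ t in (0:ℝ)..1, Λ t (deriv v t - τ • X t)) + τ * ∫ t in (0:ℝ)..1, Λ t (X t) := by
    rw [← intervalIntegral.integral_const_mul,
      ← intervalIntegral.integral_add ((hΛ.clm_apply hg).intervalIntegrable 0 1)
        (((hΛ.clm_apply hX).intervalIntegrable 0 1).const_mul τ)]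
    simp
  have hΛX_integral : κ / 2 ≤ ∫ t in (0:ℝ)..1, Λ t (X t) := by
    simpa using intervalIntegral.integral_mono_on (μ := volume) zero_le_one
      intervalIntegrable_const ((hΛ.clm_apply hX).intervalIntegrable 0 1) hΛX
  rw [hsplit, ge_iff_le]
  linarith [sub_abs_le_abs_neg_add_mul (I := ∫ t in (0:ℝ)..1, Λ t (deriv v t - τ • X t))
    (τ := τ) (abs_le.1 hμ).2 hΛX_integral, abs_intervalIntegral_clm_apply_le (Λ := Λ) hg hΛL]

/-- Step 1a estimate of the fundamental lemma, abstracted: for a `C¹` loop `v`,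
a continuous family of linear functionals `Λ` with `Λ(t)(X(t)) ≥ κ/2` and
`‖Λ(t)‖ ≤ L` on `[0,1]`, and `|μ| ≤ κ/3`, the quantity
`|−∫₀¹ Λ(t)(v'(t)) dt + τ·μ|` is bounded below by
`(κ/6)·|τ| − L·(∫₀¹ ‖v'(t) − τ·X(t)‖² dt)^{1/2}`. -/
theorem step1a_abstract (N : ℕ) (hN : 1 ≤ N) (κ L τ μ : ℝ)
    (hκ : 0 < κ) (hL : 0 < L)
    (v : ℝ → EuclideanSpace ℝ (Fin N)) (hv : ContDiff ℝ 1 v)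
    (hper : ∀ t : ℝ, v (t + 1) = v t)
    (Λ : ℝ → (EuclideanSpace ℝ (Fin N) →L[ℝ] ℝ)) (hΛ : Continuous Λ)
    (X : ℝ → EuclideanSpace ℝ (Fin N)) (hX : Continuous X)
    (hΛX : ∀ t ∈ Set.Icc (0:ℝ) 1, κ / 2 ≤ Λ t (X t))
    (hΛL : ∀ t ∈ Set.Icc (0:ℝ) 1, ‖Λ t‖ ≤ L)
    (hμ : |μ| ≤ κ / 3) :
    |-(∫ t in (0:ℝ)..1, Λ t (deriv v t)) + τ * μ| ≥
      (κ / 6) * |τ|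
        - L * Real.sqrt (∫ t in (0:ℝ)..1, ‖deriv v t - τ • X t‖ ^ 2) :=
  step1a_abstract_general N κ L τ μ v hv Λ hΛ X hX hΛX hΛL hμ
end

section
/- (Step 2 estimate, single particle.) Let n ≥ 1, C > 0, let H : ℝ^{2n} → ℝ be C¹ with ‖∇H(z)‖ ≤ C for all z, let a : ℝ → ℝ be continuous, let v : ℝ → ℝ^{2n} be C¹, and let t₀ ≤ t₁ ≤ t₀ + 1 be real numbers. Then H(v(t₁)) − H(v(t₀)) ≤ C·( ∫_{t₀}^{t₀+1} ‖v'(t) − a(t)·J∇H(v(t))‖² dt )^{1/2}. -/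
/-!
Along `v`, `d/dt H(v) = ⟪∇H(v), v'⟫ = ⟪∇H(v), v' - a·J∇H(v)⟫`, because `J` is skew. Bounding this
by `C‖v' - a·J∇H(v)‖` and integrating gives the estimate over `[t₀, t₁]`; enlarging the interval to
`[t₀, t₀ + 1]` and applying Cauchy–Schwarz on this unit interval gives the square root.
-/

open MeasureTheory Set
open scoped InnerProductSpace Gradient

noncomputable section

theorem continuous_Jmap (n : ℕ) : Continuous (Jmap n) := by
  refine (PiLp.continuous_toLp 2 _).comp (continuous_pi fun i => ?_)
  rcases i with j | j <;> simp only [Sum.elim_inl, Sum.elim_inr] <;> fun_prop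

theorem inner_self_Jmap (n : ℕ) (z : EuclideanSpace ℝ (Fin n ⊕ Fin n)) :
    ⟪z, Jmap n z⟫_ℝ = 0 := by
  simp [Jmap, PiLp.inner_apply, Fintype.sum_sum_type, mul_comm]

theorem ContDiff.continuous_gradient {E : Type*} [NormedAddCommGroup E] [InnerProductSpace ℝ E]
    [CompleteSpace E] {f : E → ℝ} {n : WithTop ℕ∞} (hf : ContDiff ℝ n f) (hn : n ≠ 0) :
    Continuous (∇ f) :=
  (InnerProductSpace.toDual ℝ E).symm.continuous.comp (hf.continuous_fderiv hn)

theorem integral_le_sqrt_measureReal_mul_sqrt_integral_sq {α : Type*} [MeasurableSpace α]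
    {μ : Measure α} [IsFiniteMeasure μ] {f : α → ℝ} (hf₀ : 0 ≤ᵐ[μ] f) (hf : MemLp f 2 μ) :
    ∫ x, f x ∂μ ≤ √(μ.real univ) * √(∫ x, f x ^ 2 ∂μ) := by
  have := integral_mul_le_Lp_mul_Lq_of_nonneg Real.HolderConjugate.two_two hf₀
    (Filter.Eventually.of_forall fun _ => zero_le_one) (by simpa using hf) (memLp_const (1 : ℝ))
  simp only [mul_one, integral_const, smul_eq_mul, Real.rpow_two] at this
  rw [Real.sqrt_eq_rpow, Real.sqrt_eq_rpow, mul_comm]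
  simpa [one_div] using this

theorem intervalIntegral_le_sqrt_mul_sqrt_integral_sq {f : ℝ → ℝ} {a b : ℝ} (hab : a ≤ b)
    (hf₀ : ∀ t ∈ Ioc a b, 0 ≤ f t) (hf : ContinuousOn f (Icc a b)) :
    ∫ t in a..b, f t ≤ √(b - a) * √(∫ t in a..b, f t ^ 2) := by
  have hmeas : AEStronglyMeasurable f (volume.restrict (Ioc a b)) :=
    (hf.mono Ioc_subset_Icc_self).aestronglyMeasurable measurableSet_Ioc
  have hsq : IntegrableOn (fun t => f t ^ 2) (Ioc a b) :=
    ((hf.pow 2).integrableOn_Icc).mono_set Ioc_subset_Icc_self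
  rw [intervalIntegral.integral_of_le hab, intervalIntegral.integral_of_le hab]
  simpa [hab] using integral_le_sqrt_measureReal_mul_sqrt_integral_sq
    ((ae_restrict_iff' measurableSet_Ioc).2 (Filter.Eventually.of_forall hf₀))
    ((memLp_two_iff_integrable_sq hmeas).2 hsq)

theorem sub_le_mul_integral_norm_sub_of_inner_gradient_eq_zero
    {E : Type*} [NormedAddCommGroup E] [InnerProductSpace ℝ E] [CompleteSpace E]
    {H : E → ℝ} {C : ℝ} {v X : ℝ → E} {t₀ t₁ : ℝ}
    (hH : Differentiable ℝ H) (hv : Differentiable ℝ v) (hgrad : ∀ t, ‖∇ H (v t)‖ ≤ C)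
    (hX : ∀ t, ⟪∇ H (v t), X t⟫_ℝ = 0)
    (hint : IntervalIntegrable (fun t => ‖deriv v t - X t‖) volume t₀ t₁) (h : t₀ ≤ t₁) :
    H (v t₁) - H (v t₀) ≤ C * ∫ t in t₀..t₁, ‖deriv v t - X t‖ := by
  have hderiv : ∀ t, HasDerivAt (H ∘ v) ⟪∇ H (v t), deriv v t⟫_ℝ t := fun t => by
    simpa only [inner_gradient_left] using
      (hH (v t)).hasFDerivAt.comp_hasDerivAt t (hv t).hasDerivAt
  have hbound : ∀ t, ⟪∇ H (v t), deriv v t⟫_ℝ ≤ C * ‖deriv v t - X t‖ := fun t =>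
    calc ⟪∇ H (v t), deriv v t⟫_ℝ = ⟪∇ H (v t), deriv v t - X t⟫_ℝ := by
          rw [inner_sub_right, hX, sub_zero]
      _ ≤ ‖∇ H (v t)‖ * ‖deriv v t - X t‖ := real_inner_le_norm _ _
      _ ≤ C * ‖deriv v t - X t‖ := by gcongr; exact hgrad t
  rw [← intervalIntegral.integral_const_mul]
  exact intervalIntegral.sub_le_integral_of_hasDeriv_right_of_le h
    (hH.continuous.comp hv.continuous).continuousOn
    (fun t _ => (hderiv t).hasDerivWithinAt)
    ((intervalIntegrable_iff_integrableOn_Icc_of_le h).1 (hint.const_mul C)) (fun t _ => hbound t)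

theorem step2_single_particle_general (n : ℕ) (C : ℝ)
    (H : EuclideanSpace ℝ (Fin n ⊕ Fin n) → ℝ) (hH : ContDiff ℝ 1 H)
    (hgrad : ∀ z, ‖gradient H z‖ ≤ C)
    (a : ℝ → ℝ) (ha : Continuous a)
    (v : ℝ → EuclideanSpace ℝ (Fin n ⊕ Fin n)) (hv : ContDiff ℝ 1 v)
    (t₀ t₁ : ℝ) (h₀₁ : t₀ ≤ t₁) (h₁ : t₁ ≤ t₀ + 1) :
    H (v t₁) - H (v t₀) ≤
      C * Real.sqrt (∫ t in t₀..(t₀ + 1),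
        ‖deriv v t - a t • Jmap n (gradient H (v t))‖ ^ 2) := by
  have hC : 0 ≤ C := (norm_nonneg _).trans (hgrad 0)
  have hw : Continuous fun t => ‖deriv v t - a t • Jmap n (∇ H (v t))‖ :=
    ((hv.continuous_deriv le_rfl).sub
      (ha.smul ((continuous_Jmap n).comp ((hH.continuous_gradient one_ne_zero).comp
        hv.continuous)))).norm
  calc H (v t₁) - H (v t₀)
      ≤ C * ∫ t in t₀..t₁, ‖deriv v t - a t • Jmap n (∇ H (v t))‖ :=
        sub_le_mul_integral_norm_sub_of_inner_gradient_eq_zero (hH.differentiable one_ne_zero)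
          (hv.differentiable one_ne_zero) (fun t => hgrad _)
          (fun t => by rw [real_inner_smul_right, inner_self_Jmap, mul_zero])
          (hw.intervalIntegrable _ _) h₀₁
    _ ≤ C * ∫ t in t₀..(t₀ + 1), ‖deriv v t - a t • Jmap n (∇ H (v t))‖ := by
        gcongr
        exact intervalIntegral.integral_mono_interval le_rfl h₀₁ h₁
          (ae_of_all _ fun _ => norm_nonneg _) (hw.intervalIntegrable _ _)
    _ ≤ C * (√(t₀ + 1 - t₀) *
          √(∫ t in t₀..(t₀ + 1), ‖deriv v t - a t • Jmap n (∇ H (v t))‖ ^ 2)) := by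
        gcongr
        exact intervalIntegral_le_sqrt_mul_sqrt_integral_sq (by linarith)
          (fun _ _ => norm_nonneg _) hw.continuousOn
    _ = _ := by rw [add_sub_cancel_left, Real.sqrt_one, one_mul]

/-- Step 2 estimate, single particle: if `‖∇H‖ ≤ C` everywhere, then for any `C¹`
curve `v` and times `t₀ ≤ t₁ ≤ t₀ + 1`, the energy difference is controlled by
the `L²`-distance of `v'` from the rescaled Hamiltonian vector field:
`H(v(t₁)) − H(v(t₀)) ≤ C·(∫_{t₀}^{t₀+1} ‖v'(t) − a(t)·J∇H(v(t))‖² dt)^{1/2}`. -/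
theorem step2_single_particle (n : ℕ) (hn : 1 ≤ n) (C : ℝ) (hC : 0 < C)
    (H : EuclideanSpace ℝ (Fin n ⊕ Fin n) → ℝ) (hH : ContDiff ℝ 1 H)
    (hgrad : ∀ z, ‖gradient H z‖ ≤ C)
    (a : ℝ → ℝ) (ha : Continuous a)
    (v : ℝ → EuclideanSpace ℝ (Fin n ⊕ Fin n)) (hv : ContDiff ℝ 1 v)
    (t₀ t₁ : ℝ) (h₀₁ : t₀ ≤ t₁) (h₁ : t₁ ≤ t₀ + 1) :
    H (v t₁) - H (v t₀) ≤
      C * Real.sqrt (∫ t in t₀..(t₀ + 1),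
        ‖deriv v t - a t • Jmap n (gradient H (v t))‖ ^ 2) :=
  step2_single_particle_general n C H hH hgrad a ha v hv t₀ t₁ h₀₁ h₁
end
end
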